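/- Equivalence of the two GLODF representations: if the matrix I − B_F C_F^T A C_F is invertible, then B_{−F} C_{−F}^T A_{−F} C_F = B_{−F} C_{−F}^T A C_F (I − B_F C_F^T A C_F)^{−1}; that is, the generalized line outage distribution factor matrix K^F computed from the post-contingency matrix A_{−F} coincides with its expression in terms of the pre-contingency matrix A. -/

import Mathlib

open Matrix MeasureTheory

variable {n m : ℕ}

/-- Incidence matrix of an oriented network with buses `Fin (n+1)` (bus `Fin.last n` is the
reference bus) and oriented lines indexed by `Fin m` with endpoint maps `src`, `tgt`. -/
def incM (src tgt : Fin m → Fin (n+1)) : Matrix (Fin (n+1)) (Fin m) ℝ :=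
  Matrix.of fun i l => if src l = i then 1 else if tgt l = i then -1 else 0

/-- The matrix `A` built from a Laplacian `L`: its top-left `n × n` block is the inverse of the
reduced Laplacian (obtained by deleting the last row and column) and all other entries are `0`. -/
noncomputable def AmatL (L : Matrix (Fin (n+1)) (Fin (n+1)) ℝ) : Matrix (Fin (n+1)) (Fin (n+1)) ℝ :=
  Matrix.of fun i j =>
    if h : i ≠ Fin.last n ∧ j ≠ Fin.last n then
      (L.submatrix Fin.castSucc Fin.castSucc)⁻¹ (i.castPred h.1) (j.castPred h.2)
    else 0

/-- The matrix `A` of the network with susceptance vector `b`. -/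
noncomputable def Amat (src tgt : Fin m → Fin (n+1)) (b : Fin m → ℝ) : Matrix (Fin (n+1)) (Fin (n+1)) ℝ :=
  AmatL (incM src tgt * Matrix.diagonal b * (incM src tgt)ᵀ)

/-- Power transfer distribution factor `D_{l, k ĵ}`. -/
noncomputable def ptdf (src tgt : Fin m → Fin (n+1)) (b : Fin m → ℝ) (l : Fin m) (k jh : Fin (n+1)) : ℝ :=
  b l * (Amat src tgt b (src l) k + Amat src tgt b (tgt l) jh
       - Amat src tgt b (src l) jh - Amat src tgt b (tgt l) k)

/-- The underlying simple graph of the network. -/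
def netGraph (src tgt : Fin m → Fin (n+1)) : SimpleGraph (Fin (n+1)) :=
  SimpleGraph.fromRel fun a c => ∃ l, src l = a ∧ tgt l = c

/-- There is a simple path in the network from `jh` to `k` that contains line `l`. -/
def PathThrough (src tgt : Fin m → Fin (n+1)) (jh k : Fin (n+1)) (l : Fin m) : Prop :=
  ∃ w : (netGraph src tgt).Walk jh k, w.IsPath ∧ s(src l, tgt l) ∈ w.edges

/-- Lines `e₁` and `e₂` belong to the same block: they are equal or lie on a common simple cycle. -/
def sameBlock (src tgt : Fin m → Fin (n+1)) (e₁ e₂ : Fin m) : Prop :=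
  e₁ = e₂ ∨ ∃ (v : Fin (n+1)) (c : (netGraph src tgt).Walk v v),
    c.IsCycle ∧ s(src e₁, tgt e₁) ∈ c.edges ∧ s(src e₂, tgt e₂) ∈ c.edges

/-- A cut vertex: a vertex whose removal disconnects the graph. -/
def IsCutVertex {V : Type*} (G : SimpleGraph V) (v : V) : Prop :=
  ¬ (G.induce {w : V | w ≠ v}).Connected

/-- The subgraph of the network with only the lines in `S`. -/
def netGraphOn (src tgt : Fin m → Fin (n+1)) (S : Set (Fin m)) : SimpleGraph (Fin (n+1)) :=
  SimpleGraph.fromRel fun a c => ∃ l ∈ S, src l = a ∧ tgt l = c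

def maskIn (F : Finset (Fin m)) (b : Fin m → ℝ) : Fin m → ℝ := fun l => if l ∈ F then b l else 0
def maskOut (F : Finset (Fin m)) (b : Fin m → ℝ) : Fin m → ℝ := fun l => if l ∈ F then 0 else b l

/-- Column submatrix `C_F` (columns outside `F` zeroed out). -/
def CFmat (src tgt : Fin m → Fin (n+1)) (F : Finset (Fin m)) : Matrix (Fin (n+1)) (Fin m) ℝ :=
  Matrix.of fun i l => if l ∈ F then incM src tgt i l else 0

/-- Column submatrix `C_{−F}` (columns in `F` zeroed out). -/
def CmFmat (src tgt : Fin m → Fin (n+1)) (F : Finset (Fin m)) : Matrix (Fin (n+1)) (Fin m) ℝ :=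
  Matrix.of fun i l => if l ∈ F then 0 else incM src tgt i l

/-- Diagonal susceptance matrix `B_F`. -/
def BFmat (b : Fin m → ℝ) (F : Finset (Fin m)) : Matrix (Fin m) (Fin m) ℝ :=
  Matrix.diagonal (maskIn F b)

/-- Diagonal susceptance matrix `B_{−F}`. -/
def BmFmat (b : Fin m → ℝ) (F : Finset (Fin m)) : Matrix (Fin m) (Fin m) ℝ :=
  Matrix.diagonal (maskOut F b)

/-- The matrix `A_{−F}` of the post-contingency network `(N, E ∖ F)`. -/
noncomputable def AmFmat (src tgt : Fin m → Fin (n+1)) (b : Fin m → ℝ) (F : Finset (Fin m)) :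
    Matrix (Fin (n+1)) (Fin (n+1)) ℝ :=
  AmatL (CmFmat src tgt F * BmFmat b F * (CmFmat src tgt F)ᵀ)

/-- The `k`-th standard unit vector of `ℝ^{n+1}`. -/
def evec (k : Fin (n+1)) : Fin (n+1) → ℝ := Pi.single k 1

/-!
The pre- and post-contingency Laplacians differ by `L − L_{−F} = C_F B_F C_Fᵀ`. Both reduced
Laplacians are positive definite, because the post-contingency network (hence also the full one) is
connected, so `A` and `A_{−F}` are their inverses padded by zeros and satisfy the resolvent
identity `A_{−F} (L − L_{−F}) A = A_{−F} − A`. Multiplied by `C_F` on the right this reads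
`A_{−F} C_F (I − B_F C_Fᵀ A C_F) = A C_F`, and inverting `I − B_F C_Fᵀ A C_F` gives the claim.
-/

section MatrixAlgebra

variable {ι κ R : Type*} [Fintype κ] [CommRing R]

lemma mul_diagonal_mul_transpose_apply [DecidableEq κ] (X Y : Matrix ι κ R) (d : κ → R)
    (i j : ι) : (X * diagonal d * Yᵀ) i j = ∑ l, X i l * d l * Y j l := by
  simp only [Matrix.mul_assoc, mul_apply (M := X), diagonal_mul, transpose_apply, mul_assoc]

lemma dotProduct_mulVec_mul_diagonal_mul_transpose [Fintype ι] [DecidableEq κ]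
    (X : Matrix ι κ R) (w : κ → R) (y : ι → R) :
    y ⬝ᵥ (X * diagonal w * Xᵀ) *ᵥ y = ∑ l, w l * (Xᵀ *ᵥ y) l ^ 2 := by
  rw [← mulVec_mulVec, ← mulVec_mulVec, dotProduct_mulVec, ← mulVec_transpose]
  simp only [dotProduct, mulVec_diagonal]
  exact Finset.sum_congr rfl fun l _ => by ring

lemma mul_eq_mul_mul_one_sub_inv_of_mul_mul_eq_sub [Fintype ι] [DecidableEq κ]
    {A A' : Matrix ι ι R} {C : Matrix ι κ R} {K : Matrix κ ι R}
    (h : A' * (C * K) * A = A' - A) (hinv : IsUnit (1 - K * A * C)) :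
    A' * C = A * C * (1 - K * A * C)⁻¹ := by
  have hmul : A' * C * (1 - K * A * C) = A * C := by
    rw [Matrix.mul_sub, Matrix.mul_one,
      show A' * C * (K * A * C) = A' * (C * K) * A * C by simp only [Matrix.mul_assoc], h,
      Matrix.sub_mul, sub_sub_cancel]
  rw [← hmul, mul_nonsing_inv_cancel_right _ _ ((isUnit_iff_isUnit_det _).mp hinv)]

end MatrixAlgebra

lemma SimpleGraph.Reachable.eq_of_forall_adj {V β : Type*} {G : SimpleGraph V} {f : V → β}
    (h : ∀ a c, G.Adj a c → f a = f c) {u v : V} (huv : G.Reachable u v) : f u = f v := by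
  obtain ⟨p⟩ := huv
  induction p with
  | nil => rfl
  | cons ha _ ih => exact (h _ _ ha).trans ih

section CastSuccMatrix

variable (R : Type*) [Semiring R]

def castSuccMatrix (n : ℕ) : Matrix (Fin (n+1)) (Fin n) R :=
  of fun i j => if i = j.castSucc then 1 else 0

variable {R}

lemma castSuccMatrix_transpose_mul {α : Type*} [Fintype α] (X : Matrix (Fin (n+1)) α R) :
    (castSuccMatrix R n)ᵀ * X = X.submatrix Fin.castSucc id := by
  ext a k
  simp [castSuccMatrix, mul_apply]

lemma mul_castSuccMatrix {α : Type*} [Fintype α] (X : Matrix α (Fin (n+1)) R) :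
    X * castSuccMatrix R n = X.submatrix id Fin.castSucc := by
  ext a k
  simp [castSuccMatrix, mul_apply]

end CastSuccMatrix

lemma AmatL_eq_castSuccMatrix_mul (L : Matrix (Fin (n+1)) (Fin (n+1)) ℝ) :
    AmatL L = castSuccMatrix ℝ n * (L.submatrix Fin.castSucc Fin.castSucc)⁻¹ *
      (castSuccMatrix ℝ n)ᵀ := by
  ext i j
  induction i using Fin.lastCases <;> induction j using Fin.lastCases <;>
    simp [AmatL, castSuccMatrix, mul_apply, (Fin.castSucc_ne_last _).symm]

lemma AmatL_mul_sub_mul_AmatL {L L' : Matrix (Fin (n+1)) (Fin (n+1)) ℝ}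
    (hL : IsUnit (L.submatrix Fin.castSucc Fin.castSucc))
    (hL' : IsUnit (L'.submatrix Fin.castSucc Fin.castSucc)) :
    AmatL L' * (L - L') * AmatL L = AmatL L' - AmatL L := by
  set M := L.submatrix Fin.castSucc Fin.castSucc
  set M' := L'.submatrix Fin.castSucc Fin.castSucc
  rw [AmatL_eq_castSuccMatrix_mul L', AmatL_eq_castSuccMatrix_mul L]
  set J := castSuccMatrix ℝ n
  have hdiff : Jᵀ * (L - L') * J = M - M' := by
    rw [castSuccMatrix_transpose_mul, mul_castSuccMatrix]
    rfl
  calc J * M'⁻¹ * Jᵀ * (L - L') * (J * M⁻¹ * Jᵀ)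
      = J * (M'⁻¹ * (Jᵀ * (L - L') * J) * M⁻¹) * Jᵀ := by simp only [Matrix.mul_assoc]
    _ = J * (M'⁻¹ - M⁻¹) * Jᵀ := by rw [hdiff, inv_sub_inv (iff_of_true hL' hL)]
    _ = J * M'⁻¹ * Jᵀ - J * M⁻¹ * Jᵀ := by rw [Matrix.mul_sub, Matrix.sub_mul]

section Network

variable (src tgt : Fin m → Fin (n+1))

lemma incM_transpose_mulVec_apply {l : Fin m} (hl : src l ≠ tgt l) (y : Fin (n+1) → ℝ) :
    ((incM src tgt)ᵀ *ᵥ y) l = y (src l) - y (tgt l) := by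
  rw [mulVec, dotProduct, Fintype.sum_eq_add (src l) (tgt l) hl]
  · simp [incM, hl, sub_eq_add_neg]
  · rintro i ⟨hs, ht⟩
    simp [incM, Ne.symm hs, Ne.symm ht]

lemma eq_of_netGraphOn_adj {S : Set (Fin m)} {y : Fin (n+1) → ℝ}
    (hy : ∀ l ∈ S, ((incM src tgt)ᵀ *ᵥ y) l = 0) {a c : Fin (n+1)}
    (hac : (netGraphOn src tgt S).Adj a c) : y a = y c := by
  rw [netGraphOn, SimpleGraph.fromRel_adj] at hac
  obtain ⟨hne, ⟨l, hl, rfl, rfl⟩ | ⟨l, hl, rfl, rfl⟩⟩ := hac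
  · exact sub_eq_zero.mp ((incM_transpose_mulVec_apply src tgt hne y).symm.trans (hy l hl))
  · exact (sub_eq_zero.mp
      ((incM_transpose_mulVec_apply src tgt hne.symm y).symm.trans (hy l hl))).symm

theorem posDef_reducedLaplacian {w : Fin m → ℝ} (hw : 0 ≤ w) {S : Set (Fin m)}
    (hS : ∀ l ∈ S, 0 < w l) (hconn : (netGraphOn src tgt S).Connected) :
    ((incM src tgt * diagonal w * (incM src tgt)ᵀ).submatrix
      Fin.castSucc Fin.castSucc).PosDef := by
  have hL : (incM src tgt * diagonal w * (incM src tgt)ᵀ).PosSemidef := by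
    simpa [conjTranspose_eq_transpose_of_trivial] using
      (PosSemidef.diagonal hw).mul_mul_conjTranspose_same (incM src tgt)
  refine .of_dotProduct_mulVec_pos (hL.submatrix _).isHermitian fun x hx => ?_
  -- extend `x` by `0` at the reference bus; zero energy makes `y` constant, hence `0`
  set y : Fin (n+1) → ℝ := Fin.snoc x 0
  have hform : star x ⬝ᵥ ((incM src tgt * diagonal w * (incM src tgt)ᵀ).submatrix
      Fin.castSucc Fin.castSucc) *ᵥ x =
        y ⬝ᵥ (incM src tgt * diagonal w * (incM src tgt)ᵀ) *ᵥ y := by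
    simp [dotProduct, mulVec, Fin.sum_univ_castSucc, y]
  have hterm : ∀ l, 0 ≤ w l * ((incM src tgt)ᵀ *ᵥ y) l ^ 2 :=
    fun l => mul_nonneg (hw l) (sq_nonneg _)
  rw [hform, dotProduct_mulVec_mul_diagonal_mul_transpose]
  refine (Finset.sum_nonneg fun l _ => hterm l).lt_of_ne fun hzero => hx ?_
  have hflow : ∀ l ∈ S, ((incM src tgt)ᵀ *ᵥ y) l = 0 := fun l hl => by
    have hl0 := (Finset.sum_eq_zero_iff_of_nonneg fun l _ => hterm l).mp hzero.symm l
      (Finset.mem_univ l)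
    simpa [(hS l hl).ne'] using hl0
  funext i
  simpa [y] using (hconn.preconnected i.castSucc (Fin.last n)).eq_of_forall_adj
    fun _ _ => eq_of_netGraphOn_adj src tgt hflow

end Network

section Contingency

variable (src tgt : Fin m → Fin (n+1)) (b : Fin m → ℝ) (F : Finset (Fin m))

lemma CmFmat_mul_BmFmat_mul_transpose :
    CmFmat src tgt F * BmFmat b F * (CmFmat src tgt F)ᵀ
      = incM src tgt * diagonal (maskOut F b) * (incM src tgt)ᵀ := by
  ext i j
  simp only [BmFmat, mul_diagonal_mul_transpose_apply]
  refine Finset.sum_congr rfl fun l _ => ?_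
  simp only [CmFmat, of_apply, maskOut]
  split_ifs <;> ring

lemma laplacian_sub_CmFmat_mul_BmFmat_mul_transpose :
    incM src tgt * diagonal b * (incM src tgt)ᵀ
        - CmFmat src tgt F * BmFmat b F * (CmFmat src tgt F)ᵀ
      = CFmat src tgt F * BFmat b F * (CFmat src tgt F)ᵀ := by
  ext i j
  simp only [Matrix.sub_apply, BmFmat, BFmat, mul_diagonal_mul_transpose_apply]
  rw [← Finset.sum_sub_distrib]
  refine Finset.sum_congr rfl fun l _ => ?_
  simp only [CmFmat, CFmat, of_apply, maskOut, maskIn]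
  split_ifs <;> ring

end Contingency

theorem glodf_representations_agree_general
    {n m : ℕ} (src tgt : Fin m → Fin (n+1))
    (b : Fin m → ℝ) (hb : ∀ l, 0 < b l)
    (F : Finset (Fin m))
    (hconnPost : (netGraphOn src tgt {l | l ∉ F}).Connected)
    (hinv : IsUnit (1 - BFmat b F * (CFmat src tgt F)ᵀ * Amat src tgt b * CFmat src tgt F)) :
    BmFmat b F * (CmFmat src tgt F)ᵀ * AmFmat src tgt b F * CFmat src tgt F =
      BmFmat b F * (CmFmat src tgt F)ᵀ * Amat src tgt b * CFmat src tgt F *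
        (1 - BFmat b F * (CFmat src tgt F)ᵀ * Amat src tgt b * CFmat src tgt F)⁻¹ := by
  have hpre := posDef_reducedLaplacian src tgt (fun l => (hb l).le) (fun l _ => hb l) hconnPost
  have hpost := posDef_reducedLaplacian src tgt (w := maskOut F b)
    (fun l => by by_cases hl : l ∈ F <;> simp [maskOut, hl, (hb l).le])
    (fun l (hl : l ∉ F) => by simpa [maskOut, hl] using hb l) hconnPost
  rw [← CmFmat_mul_BmFmat_mul_transpose] at hpost
  have hresolvent : AmFmat src tgt b F * (CFmat src tgt F * (BFmat b F * (CFmat src tgt F)ᵀ)) *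
      Amat src tgt b = AmFmat src tgt b F - Amat src tgt b := by
    rw [← Matrix.mul_assoc (CFmat src tgt F), ← laplacian_sub_CmFmat_mul_BmFmat_mul_transpose]
    exact AmatL_mul_sub_mul_AmatL hpre.isUnit hpost.isUnit
  rw [Matrix.mul_assoc _ (AmFmat src tgt b F),
    mul_eq_mul_mul_one_sub_inv_of_mul_mul_eq_sub hresolvent hinv]
  simp only [Matrix.mul_assoc]

/-- equivalence of the two GLODF representations. If `I − B_F C_Fᵀ A C_F`
is invertible, then the GLODF computed from the post-contingency matrix `A_{−F}` coincides
with its expression in terms of the pre-contingency matrix `A`: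
`B_{−F} C_{−F}ᵀ A_{−F} C_F = B_{−F} C_{−F}ᵀ A C_F (I − B_F C_Fᵀ A C_F)⁻¹`. -/
theorem glodf_representations_agree
    {n m : ℕ} (src tgt : Fin m → Fin (n+1)) (hsl : ∀ l, src l ≠ tgt l)
    (b : Fin m → ℝ) (hb : ∀ l, 0 < b l)
    (F : Finset (Fin m))
    (hconnPre : (netGraph src tgt).Connected)
    (hconnPost : (netGraphOn src tgt {l | l ∉ F}).Connected)
    (hinv : IsUnit (1 - BFmat b F * (CFmat src tgt F)ᵀ * Amat src tgt b * CFmat src tgt F)) :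
    BmFmat b F * (CmFmat src tgt F)ᵀ * AmFmat src tgt b F * CFmat src tgt F =
      BmFmat b F * (CmFmat src tgt F)ᵀ * Amat src tgt b * CFmat src tgt F *
        (1 - BFmat b F * (CFmat src tgt F)ᵀ * Amat src tgt b * CFmat src tgt F)⁻¹ :=
  glodf_representations_agree_general src tgt b hb F hconnPost hinv
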